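/- Let 𝔧 be a strongly stable ideal in R, m a positive integer, and 𝔊 a [𝔧,m]-marked set. Then 𝔊 is a [𝔧,m]-marked basis if and only if 𝔊 admits a [𝔧,m]-completion and the [𝔧,m]-reduced forms modulo (𝔊) are unique. -/

import Mathlib

open MvPolynomial

namespace Paper

/-- Monomials (exponent vectors) in `N` variables. -/
abbrev Mon (N : ℕ) := Fin N →₀ ℕ

variable {N : ℕ}

/-- Total degree of a monomial. -/
def mdeg (u : Mon N) : ℕ := u.sum fun _ e => e

/-- `BorelStep a b` : `b` is obtained from `a` by one increasing elementary move,
i.e. `x^a · x_j = x^b · x_i` with `i < j`. -/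
def BorelStep (a b : Mon N) : Prop :=
  ∃ i j : Fin N, i < j ∧ a + Finsupp.single j 1 = b + Finsupp.single i 1

/-- `BorelLt a b` : `a <_B b`, i.e. `b` is obtained from `a` by a nonempty
sequence of increasing elementary moves. -/
def BorelLt (a b : Mon N) : Prop := Relation.TransGen BorelStep a b

/-- A (combinatorially encoded) monomial ideal: a set of monomials closed
under multiplication by monomials. -/
def MonIdeal (J : Set (Mon N)) : Prop := ∀ u ∈ J, ∀ d : Mon N, u + d ∈ J

/-- A strongly stable monomial ideal. -/
def StronglyStable (J : Set (Mon N)) : Prop :=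
  MonIdeal J ∧ ∀ b ∈ J, ∀ a, BorelLt b a → a ∈ J

/-- The minimal monomial basis `B_J` of a monomial ideal. -/
def MinBasis (J : Set (Mon N)) : Set (Mon N) :=
  {u | u ∈ J ∧ ∀ v ∈ J, v ≤ u → v = u}

/-- `min(x^a) ≥ max(x^h)`. -/
def StarCond (a h : Mon N) : Prop :=
  ∀ i j : Fin N, a i ≠ 0 → h j ≠ 0 → j ≤ i


variable (K : Type) [Field K]

/-- The monomial `x^u` as a polynomial. -/
noncomputable def mono {N : ℕ} (u : Mon N) : MvPolynomial (Fin N) K :=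
  MvPolynomial.monomial u (1 : K)

/-- The (actual) monomial ideal of `S` spanned by a set of monomials. -/
noncomputable def idealOf {N : ℕ} (J : Set (Mon N)) : Ideal (MvPolynomial (Fin N) K) :=
  Ideal.span (mono K '' J)

/-- The irrelevant maximal ideal `(x_0, …, x_n)`. -/
noncomputable def irrel (N : ℕ) : Ideal (MvPolynomial (Fin N) K) :=
  Ideal.span (Set.range MvPolynomial.X)

/-- The saturation `I^sat = ⋃_j (I : (x_0,…,x_n)^j)`. -/
noncomputable def satIdeal {N : ℕ} (I : Ideal (MvPolynomial (Fin N) K)) :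
    Ideal (MvPolynomial (Fin N) K) :=
  ⨆ k : ℕ, Submodule.colon I ((irrel K N ^ k : Ideal (MvPolynomial (Fin N) K)) : Set (MvPolynomial (Fin N) K))

/-- The satiety of a homogeneous ideal: the smallest `m` such that
`I_t = (I^sat)_t` for all `t ≥ m`. -/
noncomputable def satiety {N : ℕ} (I : Ideal (MvPolynomial (Fin N) K)) : ℕ :=
  sInf {m | ∀ t, m ≤ t → ∀ p : MvPolynomial (Fin N) K,
    p.IsHomogeneous t → (p ∈ I ↔ p ∈ satIdeal K I)}

/-- The saturation of a combinatorial monomial ideal. -/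
def msat {N : ℕ} (J : Set (Mon N)) : Set (Mon N) :=
  {u | ∃ k : ℕ, ∀ d : Mon N, mdeg d = k → u + d ∈ J}

/-- The satiety of a combinatorial monomial ideal. -/
noncomputable def msatiety {N : ℕ} (J : Set (Mon N)) : ℕ :=
  sInf {m | ∀ u : Mon N, m ≤ mdeg u → (u ∈ J ↔ u ∈ msat J)}

/-- A non-homogeneous `𝔧`-marked set: marked polynomials `f_α` with pairwise
distinct head terms forming `B_𝔧` and tails supported outside `𝔧`. -/
def NHMarkedSet {N : ℕ} (𝔧 : Set (Mon N)) (f : Mon N → MvPolynomial (Fin N) K) : Prop :=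
  ∀ α ∈ MinBasis 𝔧,
    MvPolynomial.coeff α (f α) = 1 ∧
    ∀ u ∈ (f α).support, u ≠ α → u ∉ 𝔧

/-- One step of the `𝔊_∗`-reduction: the monomial `x^γ = x^α ∗_𝔧 x^η` of the
support of `g` is replaced by `x^η · T(f_α)`. -/
def RStep {N : ℕ} (𝔧 : Set (Mon N)) (f : Mon N → MvPolynomial (Fin N) K)
    (g g₁ : MvPolynomial (Fin N) K) : Prop :=
  ∃ γ α η : Mon N, γ ∈ g.support ∧ γ ∈ 𝔧 ∧ α ∈ MinBasis 𝔧 ∧ γ = α + η ∧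
    StarCond α η ∧
    g₁ = g - MvPolynomial.coeff γ g • (mono K η * f α)

/-- The `𝔊_∗`-reduction relation (reflexive-transitive closure of `RStep`). -/
def Reduces {N : ℕ} (𝔧 : Set (Mon N)) (f : Mon N → MvPolynomial (Fin N) K) :
    MvPolynomial (Fin N) K → MvPolynomial (Fin N) K → Prop :=
  Relation.ReflTransGen (RStep K 𝔧 f)

/-- `g` is reduced: `supp(g) ∩ 𝔧 = ∅`. -/
def IsReducedPoly {N : ℕ} (𝔧 : Set (Mon N)) (g : MvPolynomial (Fin N) K) : Prop :=
  ∀ u ∈ g.support, u ∉ 𝔧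

/-- A `[𝔧,m]`-marked set: a n.h. `𝔧`-marked set whose tails are supported in
`N(𝔧)_{≤ max{m,|α|}}`. -/
def JmMarkedSet {N : ℕ} (𝔧 : Set (Mon N)) (m : ℕ)
    (f : Mon N → MvPolynomial (Fin N) K) : Prop :=
  ∀ α ∈ MinBasis 𝔧,
    MvPolynomial.coeff α (f α) = 1 ∧
    ∀ u ∈ (f α).support, u ≠ α → (u ∉ 𝔧 ∧ mdeg u ≤ max m (mdeg α))

/-- The ideal `(𝔊)` generated by a marked set. -/
noncomputable def idealG {N : ℕ} (𝔧 : Set (Mon N))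
    (f : Mon N → MvPolynomial (Fin N) K) : Ideal (MvPolynomial (Fin N) K) :=
  Ideal.span (f '' MinBasis 𝔧)

/-- A `[𝔧,m]`-completion of `𝔊`: marked polynomials `f_β ∈ (𝔊)` with pairwise
distinct head terms the monomials of `𝔧_{≤m} \ B_𝔧` and tails in `N(𝔧)_{≤m}`. -/
def IsCompletion {N : ℕ} (𝔧 : Set (Mon N)) (m : ℕ)
    (f h : Mon N → MvPolynomial (Fin N) K) : Prop :=
  ∀ β : Mon N, β ∈ 𝔧 → mdeg β ≤ m → β ∉ MinBasis 𝔧 →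
    h β ∈ idealG K 𝔧 f ∧
    MvPolynomial.coeff β (h β) = 1 ∧
    ∀ u ∈ (h β).support, u ≠ β → (u ∉ 𝔧 ∧ mdeg u ≤ m)

/-- `g'` is a `[𝔧,m]`-reduced form of `g` modulo `(𝔊)`. -/
def IsReducedForm {N : ℕ} (𝔧 : Set (Mon N)) (m : ℕ)
    (f : Mon N → MvPolynomial (Fin N) K)
    (g g' : MvPolynomial (Fin N) K) : Prop :=
  (∀ u ∈ g'.support, u ∉ 𝔧 ∧ mdeg u ≤ max m g.totalDegree) ∧
  g - g' ∈ idealG K 𝔧 f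

/-- `R_{≤ t}`: the `K`-subspace of polynomials of degree at most `t`. -/
noncomputable def degLE (N : ℕ) (t : ℕ) : Submodule K (MvPolynomial (Fin N) K) where
  carrier := {g | ∀ u ∈ g.support, mdeg u ≤ t}
  zero_mem' := by simp
  add_mem' := by
    intro a b ha hb u hu
    rcases Finset.mem_union.mp (MvPolynomial.support_add hu) with h | h
    · exact ha u h
    · exact hb u h
  smul_mem' := by
    intro c a ha u hu
    exact ha u (MvPolynomial.support_smul hu)

/-- `⟨N(𝔧)_{≤t}⟩`: the `K`-span of the monomials outside `𝔧` of degree `≤ t`. -/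
noncomputable def spanNLE {N : ℕ} (𝔧 : Set (Mon N)) (t : ℕ) :
    Submodule K (MvPolynomial (Fin N) K) :=
  Submodule.span K (mono K '' {u : Mon N | u ∉ 𝔧 ∧ mdeg u ≤ t})

/-- `(𝔊)_{≤t}`: the `K`-subspace of elements of `(𝔊)` of degree `≤ t`. -/
noncomputable def GleSub {N : ℕ} (𝔧 : Set (Mon N))
    (f : Mon N → MvPolynomial (Fin N) K) (t : ℕ) :
    Submodule K (MvPolynomial (Fin N) K) :=
  (idealG K 𝔧 f).restrictScalars K ⊓ degLE K N t

/-- A `[𝔧,m]`-marked basis: a `[𝔧,m]`-marked set with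
`R_{≤t} = ⟨N(𝔧)_{≤t}⟩ ⊕ (𝔊)_{≤t}` for all `t ≥ m`. -/
def JmMarkedBasis {N : ℕ} (𝔧 : Set (Mon N)) (m : ℕ)
    (f : Mon N → MvPolynomial (Fin N) K) : Prop :=
  JmMarkedSet K 𝔧 m f ∧
  ∀ t, m ≤ t →
    Disjoint (spanNLE K 𝔧 t) (GleSub K 𝔧 f t) ∧
    spanNLE K 𝔧 t ⊔ GleSub K 𝔧 f t = degLE K N t

/-!
The decomposition `R_{≤t} = ⟨N(𝔧)_{≤t}⟩ ⊕ (𝔊)_{≤t}` splits into two halves. Disjointness is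
uniqueness of reduced forms: two reduced forms of `g` differ by an element of both summands, and an
element of both has `0` and itself as reduced forms. For the sum, `x^β` (with `β ∈ 𝔧`,
`|β| ≤ t`) lies in it exactly when `(𝔊)` contains a polynomial marked on `x^β` with tail in
`N(𝔧)_{≤t}`; in degree `m` this is a completion. Conversely a completion spans all of `R_{≤t}`
for `t ≥ m`: by strong stability a monomial `x^u ∈ 𝔧` outside `B_𝔧` of degree `> m` factors as
`min(x^u) · x^a` with `x^a ∈ 𝔧`, and one decomposes `x^a` and multiplies by `min(x^u)`.
-/

section Monomials

variable {N : ℕ} {J : Set (Mon N)}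

lemma mdeg_add (u v : Mon N) : mdeg (u + v) = mdeg u + mdeg v :=
  map_add Finsupp.degree u v

lemma mdeg_single (i : Fin N) : mdeg (Finsupp.single i 1) = 1 :=
  Finsupp.degree_single i 1

lemma MonIdeal.mem_of_le (hJ : MonIdeal J) {u v : Mon N} (hu : u ∈ J) (huv : u ≤ v) : v ∈ J := by
  simpa [add_tsub_cancel_of_le huv] using hJ u hu (v - u)

lemma MonIdeal.exists_single_add_eq (hJ : MonIdeal J) {u : Mon N} (hu : u ∈ J)
    (hB : u ∉ MinBasis J) : ∃ j, ∃ a ∈ J, Finsupp.single j 1 + a = u := by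
  obtain ⟨v, hv, hvu, hne⟩ : ∃ v ∈ J, v ≤ u ∧ v ≠ u := by
    by_contra! h
    exact hB ⟨hu, h⟩
  obtain ⟨j, hj⟩ : ∃ j, v j < u j := by
    by_contra! h
    exact hne (le_antisymm hvu h)
  refine ⟨j, u - Finsupp.single j 1, hJ.mem_of_le hv fun k => ?_, ?_⟩
  · rcases eq_or_ne j k with rfl | hjk
    · simp only [Finsupp.tsub_apply, Finsupp.single_eq_same]
      omega
    · simpa [Finsupp.single_apply, hjk] using hvu k
  · exact add_tsub_cancel_of_le (Finsupp.single_le_iff.2 (by omega))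

lemma StronglyStable.single_add_mem_of_lt (hJ : StronglyStable J) {a : Mon N} {i j : Fin N}
    (hij : i < j) (h : Finsupp.single i 1 + a ∈ J) : Finsupp.single j 1 + a ∈ J :=
  hJ.2 _ h _ (.single ⟨i, j, hij, by abel⟩)

lemma StronglyStable.exists_single_min_add_eq (hJ : StronglyStable J) {u : Mon N} (hu : u ∈ J)
    (hB : u ∉ MinBasis J) {i : Fin N} (hi : u.support.min = i) :
    ∃ a ∈ J, Finsupp.single i 1 + a = u := by
  obtain ⟨j, a, ha, rfl⟩ := hJ.1.exists_single_add_eq hu hB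
  have hij : i ≤ j := Finset.min_le_of_eq (by simp) hi
  rcases hij.lt_or_eq with hij | rfl
  · have hai : Finsupp.single i 1 ≤ a := by
      have hui := Finset.mem_of_min hi
      rw [Finsupp.mem_support_iff, Finsupp.add_apply,
        Finsupp.single_eq_of_ne hij.ne] at hui
      exact Finsupp.single_le_iff.2 (Nat.one_le_iff_ne_zero.2 (by simpa using hui))
    obtain ⟨b, rfl⟩ := exists_add_of_le hai
    exact ⟨Finsupp.single j 1 + b, hJ.single_add_mem_of_lt hij ha, by abel⟩
  · exact ⟨a, ha, rfl⟩

lemma StronglyStable.support_min_lt (hJ : StronglyStable J) {i : Fin N} {w : Mon N}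
    (hv : Finsupp.single i 1 + w ∈ J) (hB : Finsupp.single i 1 + w ∉ MinBasis J) (hw : w ∉ J) :
    (Finsupp.single i 1 + w).support.min < (i : WithTop (Fin N)) := by
  refine lt_of_le_of_ne (Finset.min_le (by simp)) fun hmin => hw ?_
  obtain ⟨b, hb, hbw⟩ := hJ.exists_single_min_add_eq hv hB hmin
  rwa [← add_left_cancel hbw]

end Monomials

section Decomposition

variable {N : ℕ} {K : Type} [Field K] {𝔧 : Set (Mon N)} {m t : ℕ}
  {f : Mon N → MvPolynomial (Fin N) K}

lemma mem_of_forall_mono_mem {S : Submodule K (MvPolynomial (Fin N) K)}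
    {p : MvPolynomial (Fin N) K} (h : ∀ u ∈ p.support, mono K u ∈ S) : p ∈ S := by
  rw [p.as_sum]
  refine Submodule.sum_mem _ fun u hu => ?_
  simpa [mono, smul_monomial] using S.smul_mem (coeff u p) (h u hu)

lemma mem_spanNLE_iff {p : MvPolynomial (Fin N) K} :
    p ∈ spanNLE K 𝔧 t ↔ ∀ u ∈ p.support, u ∉ 𝔧 ∧ mdeg u ≤ t := by
  change p ∈ Submodule.span K ((monomial · (1 : K)) '' _) ↔ _
  rw [← restrictSupport_eq_span, mem_restrictSupport_iff]
  rfl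

lemma mono_mem_spanNLE {u : Mon N} (hu : u ∉ 𝔧) (hut : mdeg u ≤ t) :
    mono K u ∈ spanNLE K 𝔧 t :=
  Submodule.subset_span ⟨u, ⟨hu, hut⟩, rfl⟩

lemma mono_mem_degLE {u : Mon N} (hut : mdeg u ≤ t) : mono K u ∈ degLE K N t := fun v hv => by
  rwa [Finset.mem_singleton.1 (support_monomial_subset hv)]

lemma spanNLE_sup_GleSub_mono {t' : ℕ} (h : t ≤ t') :
    spanNLE K 𝔧 t ⊔ GleSub K 𝔧 f t ≤ spanNLE K 𝔧 t' ⊔ GleSub K 𝔧 f t' :=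
  sup_le_sup (Submodule.span_mono (Set.image_mono fun _ hu => ⟨hu.1, hu.2.trans h⟩))
    (inf_le_inf_left _ fun _ hp u hu => (hp u hu).trans h)

lemma spanNLE_sup_GleSub_le_degLE : spanNLE K 𝔧 t ⊔ GleSub K 𝔧 f t ≤ degLE K N t :=
  sup_le (fun _ hp u hu => (mem_spanNLE_iff.1 hp u hu).2) inf_le_right

lemma mono_mem_sup_iff {β : Mon N} (hβ : β ∈ 𝔧) (hβt : mdeg β ≤ t) :
    mono K β ∈ spanNLE K 𝔧 t ⊔ GleSub K 𝔧 f t ↔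
      ∃ p ∈ idealG K 𝔧 f, coeff β p = 1 ∧ ∀ u ∈ p.support, u ≠ β → u ∉ 𝔧 ∧ mdeg u ≤ t := by
  classical
  constructor
  · intro h
    obtain ⟨x, hx, p, hp, hxp⟩ := Submodule.mem_sup.1 h
    rw [mem_spanNLE_iff] at hx
    have hpx : p = mono K β - x := by rw [← hxp, add_sub_cancel_left]
    have hxβ : coeff β x = 0 := notMem_support_iff.1 fun h => (hx β h).1 hβ
    refine ⟨p, hp.1, by simp [hpx, mono, hxβ], fun u hu huβ => hx u ?_⟩
    simpa [hpx, mono, coeff_monomial, Ne.symm huβ] using hu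
  · rintro ⟨p, hp, hpβ, hpt⟩
    refine Submodule.mem_sup.2 ⟨mono K β - p, mem_spanNLE_iff.2 fun u hu => ?_, p,
      ⟨hp, fun u hu => ?_⟩, sub_add_cancel _ _⟩
    · have huβ : u ≠ β := by
        rintro rfl
        simp [mono, hpβ] at hu
      exact hpt u (by simpa [mono, coeff_monomial, Ne.symm huβ] using hu) huβ
    · rcases eq_or_ne u β with rfl | huβ
      exacts [hβt, (hpt u hu huβ).2]

end Decomposition

section Completion

variable {N : ℕ} {K : Type} [Field K] {𝔧 : Set (Mon N)} {m : ℕ}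
  {f h : Mon N → MvPolynomial (Fin N) K}

lemma mono_mem_sup_of_mem_minBasis (hms : JmMarkedSet K 𝔧 m f) {u : Mon N}
    (hu : u ∈ MinBasis 𝔧) :
    mono K u ∈ spanNLE K 𝔧 (max m (mdeg u)) ⊔ GleSub K 𝔧 f (max m (mdeg u)) :=
  (mono_mem_sup_iff hu.1 (le_max_right _ _)).2 ⟨f u, Ideal.subset_span ⟨u, hu, rfl⟩, hms u hu⟩

lemma mono_mem_sup_of_isCompletion (hcomp : IsCompletion K 𝔧 m f h) {u : Mon N} (hu : u ∈ 𝔧)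
    (hum : mdeg u ≤ m) (hB : u ∉ MinBasis 𝔧) :
    mono K u ∈ spanNLE K 𝔧 m ⊔ GleSub K 𝔧 f m :=
  (mono_mem_sup_iff hu hum).2 ⟨h u, hcomp u hu hum hB⟩

/-- Multiplying the normal part of `x^a` by `x_i = min(x^u)` only creates monomials of `𝔧` of lower
degree or, in the same degree, with a smaller minimal variable (`StronglyStable.support_min_lt`);
hence the induction on the degree and then on the minimal variable. -/
theorem mono_mem_sup_of_mem (hss : StronglyStable 𝔧) (hms : JmMarkedSet K 𝔧 m f)
    (hcomp : IsCompletion K 𝔧 m f h) (u : Mon N) (hu : u ∈ 𝔧) :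
    mono K u ∈ spanNLE K 𝔧 (max m (mdeg u)) ⊔ GleSub K 𝔧 f (max m (mdeg u)) := by
  induction u using (InvImage.wf (fun u : Mon N => toLex (mdeg u, u.support.min))
    wellFounded_lt).induction with
  | _ u ih =>
  by_cases hB : u ∈ MinBasis 𝔧
  · exact mono_mem_sup_of_mem_minBasis hms hB
  rcases le_or_gt (mdeg u) m with hum | hmu
  · rw [max_eq_left hum]
    exact mono_mem_sup_of_isCompletion hcomp hu hum hB
  have hu0 : u ≠ 0 := by
    rintro rfl
    simp [mdeg] at hmu
  obtain ⟨i, hi⟩ := Finset.min_of_nonempty (Finsupp.support_nonempty_iff.2 hu0)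
  obtain ⟨a, ha, rfl⟩ := hss.exists_single_min_add_eq hu hB hi
  have hdeg : mdeg (Finsupp.single i 1 + a) = 1 + mdeg a := by rw [mdeg_add, mdeg_single]
  have IH := ih a (Prod.Lex.toLex_lt_toLex.2 (.inl (by omega))) ha
  rw [max_eq_right (by omega)] at IH
  rw [max_eq_right hmu.le, hdeg]
  obtain ⟨p, hp, q, hq, hpq⟩ := Submodule.mem_sup.1 IH
  have hX : mono K (Finsupp.single i 1 + a) = X i * p + X i * q := by
    rw [← mul_add, hpq, X, mono, mono, monomial_mul, one_mul]
  rw [hX]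
  refine add_mem (mem_of_forall_mono_mem fun v hv => ?_)
    (Submodule.mem_sup_right ⟨Ideal.mul_mem_left _ _ hq.1, fun v hv => ?_⟩)
  · rw [support_X_mul, Finset.mem_map] at hv
    obtain ⟨w, hw, rfl⟩ := hv
    obtain ⟨hw𝔧, hwa⟩ := mem_spanNLE_iff.1 hp w hw
    have hvu : mdeg (Finsupp.single i 1 + w) ≤ 1 + mdeg a := by
      rw [mdeg_add, mdeg_single]
      omega
    by_cases hv𝔧 : Finsupp.single i 1 + w ∉ 𝔧
    · exact Submodule.mem_sup_left (mono_mem_spanNLE hv𝔧 hvu)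
    rw [not_not] at hv𝔧
    by_cases hvB : Finsupp.single i 1 + w ∈ MinBasis 𝔧
    · exact spanNLE_sup_GleSub_mono (max_le (by omega) hvu) (mono_mem_sup_of_mem_minBasis hms hvB)
    refine spanNLE_sup_GleSub_mono (max_le (by omega) hvu) (ih _ (Prod.Lex.toLex_lt_toLex.2 ?_) hv𝔧)
    rw [hdeg, mdeg_add, mdeg_single]
    rcases hwa.lt_or_eq with hwa | hwa
    · exact .inl (by omega)
    · exact .inr ⟨by rw [hwa], hi ▸ hss.support_min_lt hv𝔧 hvB hw𝔧⟩
  · rw [support_X_mul, Finset.mem_map] at hv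
    obtain ⟨w, hw, rfl⟩ := hv
    rw [addLeftEmbedding_apply, mdeg_add, mdeg_single]
    exact Nat.add_le_add_left (hq.2 w hw) 1

lemma degLE_le_sup_of_isCompletion (hss : StronglyStable 𝔧) (hms : JmMarkedSet K 𝔧 m f)
    (hcomp : IsCompletion K 𝔧 m f h) {t : ℕ} (ht : m ≤ t) :
    degLE K N t ≤ spanNLE K 𝔧 t ⊔ GleSub K 𝔧 f t := fun p hp =>
  mem_of_forall_mono_mem fun u hu => by
    by_cases hu𝔧 : u ∈ 𝔧
    · exact spanNLE_sup_GleSub_mono (max_le ht (hp u hu)) (mono_mem_sup_of_mem hss hms hcomp u hu𝔧)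
    · exact Submodule.mem_sup_left (mono_mem_spanNLE hu𝔧 (hp u hu))

lemma exists_isCompletion_of_degLE_le_sup
    (hle : degLE K N m ≤ spanNLE K 𝔧 m ⊔ GleSub K 𝔧 f m) :
    ∃ h, IsCompletion K 𝔧 m f h := by
  have : ∀ β, β ∈ 𝔧 → mdeg β ≤ m → ∃ p ∈ idealG K 𝔧 f,
      coeff β p = 1 ∧ ∀ u ∈ p.support, u ≠ β → u ∉ 𝔧 ∧ mdeg u ≤ m := fun β hβ hβm =>
    (mono_mem_sup_iff hβ hβm).1 (hle (mono_mem_degLE hβm))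
  choose! h hh using this
  exact ⟨h, fun β hβ hβm _ => hh β hβ hβm⟩

end Completion

section ReducedForms

variable {N : ℕ} {K : Type} [Field K] {𝔧 : Set (Mon N)} {m : ℕ}
  {f : Mon N → MvPolynomial (Fin N) K}

lemma IsReducedForm.eq_of_disjoint {g g₁ g₂ : MvPolynomial (Fin N) K}
    (hdisj : Disjoint (spanNLE K 𝔧 (max m g.totalDegree)) (GleSub K 𝔧 f (max m g.totalDegree)))
    (h₁ : IsReducedForm K 𝔧 m f g g₁) (h₂ : IsReducedForm K 𝔧 m f g g₂) : g₁ = g₂ := by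
  classical
  have hsupp : ∀ u ∈ (g₁ - g₂).support, u ∉ 𝔧 ∧ mdeg u ≤ max m g.totalDegree := fun u hu =>
    (Finset.mem_union.1 (support_sub _ _ _ hu)).elim (h₁.1 u) (h₂.1 u)
  have hG : g₁ - g₂ ∈ idealG K 𝔧 f := by
    simpa using sub_mem h₂.2 h₁.2
  exact sub_eq_zero.1 (Submodule.disjoint_def.1 hdisj _ (mem_spanNLE_iff.2 hsupp)
    ⟨hG, fun u hu => (hsupp u hu).2⟩)

lemma disjoint_of_reducedForm_unique
    (huniq : ∀ g g₁ g₂ : MvPolynomial (Fin N) K,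
      IsReducedForm K 𝔧 m f g g₁ → IsReducedForm K 𝔧 m f g g₂ → g₁ = g₂) (t : ℕ) :
    Disjoint (spanNLE K 𝔧 t) (GleSub K 𝔧 f t) := by
  refine Submodule.disjoint_def.2 fun x hN hG => huniq x x 0 ⟨fun u hu => ?_, by simp⟩
    ⟨by simp, by simpa using hG.1⟩
  exact ⟨(mem_spanNLE_iff.1 hN u hu).1, (le_totalDegree hu).trans (le_max_right _ _)⟩

end ReducedForms

theorem markedBasis_iff_completion_and_unique_general {n : ℕ} (K : Type) [Field K]
    (𝔧 : Set (Mon n)) (m : ℕ) (f : Mon n → MvPolynomial (Fin n) K)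
    (hss : StronglyStable 𝔧) (hms : JmMarkedSet K 𝔧 m f) :
    JmMarkedBasis K 𝔧 m f ↔
    ((∃ h : Mon n → MvPolynomial (Fin n) K, IsCompletion K 𝔧 m f h) ∧
      ∀ g g₁ g₂ : MvPolynomial (Fin n) K,
        IsReducedForm K 𝔧 m f g g₁ → IsReducedForm K 𝔧 m f g g₂ → g₁ = g₂) := by
  constructor
  · rintro ⟨-, hdec⟩
    exact ⟨exists_isCompletion_of_degLE_le_sup (hdec m le_rfl).2.ge,
      fun g _ _ => IsReducedForm.eq_of_disjoint (hdec _ (le_max_left _ _)).1⟩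
  · rintro ⟨⟨h, hcomp⟩, huniq⟩
    exact ⟨hms, fun t ht => ⟨disjoint_of_reducedForm_unique huniq t,
      le_antisymm spanNLE_sup_GleSub_le_degLE (degLE_le_sup_of_isCompletion hss hms hcomp ht)⟩⟩

/-- a `[𝔧,m]`-marked set `𝔊` is a `[𝔧,m]`-marked basis iff it
admits a `[𝔧,m]`-completion and `[𝔧,m]`-reduced forms modulo `(𝔊)` are unique. -/
theorem markedBasis_iff_completion_and_unique {n : ℕ} (K : Type) [Field K]
    (𝔧 : Set (Mon n)) (m : ℕ) (f : Mon n → MvPolynomial (Fin n) K)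
    (hss : StronglyStable 𝔧) (hm : 0 < m) (hms : JmMarkedSet K 𝔧 m f) :
    JmMarkedBasis K 𝔧 m f ↔
    ((∃ h : Mon n → MvPolynomial (Fin n) K, IsCompletion K 𝔧 m f h) ∧
      ∀ g g₁ g₂ : MvPolynomial (Fin n) K,
        IsReducedForm K 𝔧 m f g g₁ → IsReducedForm K 𝔧 m f g g₂ → g₁ = g₂) :=
  markedBasis_iff_completion_and_unique_general K 𝔧 m f hss hms

end Paper
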